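/- arXiv:1803.02937 — 3 statements merged into one kernel-verified Lean document; each statement's English description precedes it below -/
import Mathlib

section
/- Let Ω be a bounded open subset of ℝⁿ and let D be an open subset of ℝⁿ whose closure is contained in Ω. Let c : [0,1] → closure(Ω) be a needle, i.e. c is continuous, c(0) and c(1) lie in the frontier of Ω, and c(t) ∈ Ω for all t ∈ (0,1). If there exists t ∈ [0,1] with c(t) ∈ frontier(D), then there exists a unique t₀ ∈ (0,1) such that c(t) ∈ Ω \ closure(D) for all t ∈ (0, t₀) and c(t₀) ∈ frontier(D). -/
/-!
The impact parameter is the first hitting time `t₀ = sInf {t ∈ [0, 1] | c t ∈ closure D}`.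
It lies in `(0, 1)` because the ends of the needle are on `frontier Ω`, which misses
`closure D ⊆ Ω` since `Ω` is open, and `c t₀ ∈ frontier D` because the needle approaches
`c t₀` from outside `closure D`. Uniqueness holds because any two such times are first hitting times.
-/

open Set Filter Topology

theorem exists_first_hitting_time_mem_frontier {X : Type*} [TopologicalSpace X]
    {c : ℝ → X} {a b : ℝ} {F : Set X} (hF : IsClosed F) (hc : ContinuousOn c (Icc a b))
    (ha : c a ∉ F) (hhit : ∃ t ∈ Icc a b, c t ∈ F) :
    ∃ t₀ ∈ Ioc a b, (∀ t ∈ Ico a t₀, c t ∉ F) ∧ c t₀ ∈ frontier F := by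
  obtain ⟨s, hs, hsF⟩ := hhit
  set S := Icc a b ∩ c ⁻¹' F
  have hSbdd : BddBelow S := ⟨a, fun t ht => ht.1.1⟩
  obtain ⟨⟨hat₀, ht₀b⟩, ht₀F⟩ : sInf S ∈ S :=
    (hc.preimage_isClosed_of_isClosed isClosed_Icc hF).csInf_mem ⟨s, hs, hsF⟩ hSbdd
  have hat₀ : a < sInf S := hat₀.lt_of_ne fun h => ha (h ▸ ht₀F)
  have hbefore : ∀ t ∈ Ico a (sInf S), c t ∉ F := fun t ht htF =>
    ht.2.not_ge (csInf_le hSbdd ⟨⟨ht.1, ht.2.le.trans ht₀b⟩, htF⟩)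
  refine ⟨sInf S, ⟨hat₀, ht₀b⟩, hbefore, ?_⟩
  rw [frontier_eq_closure_inter_closure, hF.closure_eq]
  have := right_nhdsWithin_Ico_neBot hat₀
  refine ⟨ht₀F, mem_closure_of_tendsto (f := c) (b := 𝓝[Ico a (sInf S)] sInf S) ?_ ?_⟩
  · exact (hc _ ⟨hat₀.le, ht₀b⟩).mono (Ico_subset_Icc_self.trans (Icc_subset_Icc_right ht₀b))
  · filter_upwards [self_mem_nhdsWithin] using hbefore

theorem impact_parameter_exists_unique_general {n : ℕ}
    (Ω D : Set (EuclideanSpace ℝ (Fin n)))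
    (hΩopen : IsOpen Ω)
    (hDsub : closure D ⊆ Ω)
    (c : ℝ → EuclideanSpace ℝ (Fin n))
    (hc_cont : ContinuousOn c (Set.Icc 0 1))
    (hc0 : c 0 ∈ frontier Ω) (hc1 : c 1 ∈ frontier Ω)
    (hc_in : ∀ t ∈ Set.Ioo (0:ℝ) 1, c t ∈ Ω)
    (htouch : ∃ t ∈ Set.Icc (0:ℝ) 1, c t ∈ frontier D) :
    ∃! t₀ : ℝ, t₀ ∈ Set.Ioo (0:ℝ) 1 ∧
      (∀ t ∈ Set.Ioo (0:ℝ) t₀, c t ∈ Ω \ closure D) ∧ c t₀ ∈ frontier D := by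
  have hfrontier : ∀ x ∈ frontier Ω, x ∉ closure D := fun x hx hxD =>
    (hΩopen.frontier_eq ▸ hx).2 (hDsub hxD)
  obtain ⟨s, hs, hsD⟩ := htouch
  obtain ⟨t₀, ⟨ht₀pos, ht₀le⟩, hbefore, ht₀D⟩ :=
    exists_first_hitting_time_mem_frontier isClosed_closure hc_cont (hfrontier _ hc0)
      ⟨s, hs, hsD.1⟩
  replace ht₀D := frontier_closure_subset ht₀D
  have ht₀lt : t₀ < 1 := ht₀le.lt_of_ne fun h => hfrontier _ hc1 (h ▸ ht₀D.1)
  refine ⟨t₀, ⟨⟨ht₀pos, ht₀lt⟩, fun t ht => ⟨hc_in t ⟨ht.1, ht.2.trans ht₀lt⟩,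
    hbefore t ⟨ht.1.le, ht.2⟩⟩, ht₀D⟩, ?_⟩
  rintro t₁ ⟨ht₁, hbefore₁, ht₁D⟩
  rcases lt_trichotomy t₁ t₀ with h | h | h
  · exact absurd ht₁D.1 (hbefore t₁ ⟨ht₁.1.le, h⟩)
  · exact h
  · exact absurd ht₀D.1 (hbefore₁ t₀ ⟨ht₀pos, h⟩).2

/-- Let `Ω` be a bounded open subset of `ℝⁿ` and `D` an open subset with
`closure D ⊆ Ω`.  Let `c : [0,1] → closure Ω` be a needle, i.e. continuous on `[0,1]`,
with `c 0, c 1 ∈ frontier Ω` and `c t ∈ Ω` for `t ∈ (0,1)`.  If the needle touches `frontier D`,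
then there is a unique `t₀ ∈ (0,1)` such that `c t ∈ Ω \ closure D` for all `t ∈ (0, t₀)`
and `c t₀ ∈ frontier D`. -/
theorem impact_parameter_exists_unique {n : ℕ}
    (Ω D : Set (EuclideanSpace ℝ (Fin n)))
    (hΩopen : IsOpen Ω) (hΩbdd : Bornology.IsBounded Ω)
    (hDopen : IsOpen D) (hDsub : closure D ⊆ Ω)
    (c : ℝ → EuclideanSpace ℝ (Fin n))
    (hc_cont : ContinuousOn c (Set.Icc 0 1))
    (hc_maps : ∀ t ∈ Set.Icc (0:ℝ) 1, c t ∈ closure Ω)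
    (hc0 : c 0 ∈ frontier Ω) (hc1 : c 1 ∈ frontier Ω)
    (hc_in : ∀ t ∈ Set.Ioo (0:ℝ) 1, c t ∈ Ω)
    (htouch : ∃ t ∈ Set.Icc (0:ℝ) 1, c t ∈ frontier D) :
    ∃! t₀ : ℝ, t₀ ∈ Set.Ioo (0:ℝ) 1 ∧
      (∀ t ∈ Set.Ioo (0:ℝ) t₀, c t ∈ Ω \ closure D) ∧ c t₀ ∈ frontier D :=
  impact_parameter_exists_unique_general Ω D hΩopen hDsub c hc_cont hc0 hc1 hc_in htouch
end

section
/- (Claim 1) Let U ⊆ ℝ³ be open, let λc, μc be real constants with λc + 2μc ≠ 0, let g : ℝ³ → ℝ be of class C³ on U with Δg = 0 on U, let λ₀ : ℝ³ → ℝ be of class C¹ on U and μ₀ : ℝ³ → ℝ of class C² on U. Suppose w : ℝ³ → ℝ is of class C³ on U and satisfies Δw(x) = −Σₖ ∂ₖg(x)·∂ₖμ₀(x) for all x ∈ U, and E : ℝ³ → ℝ³ is of class C² on U and satisfies, for each i and all x ∈ U, Σⱼ ∂ⱼ( λc·(div E)·δᵢⱼ + 2μc·(Sym∇E)ᵢⱼ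 )(x) = 2·Σⱼ ∂ᵢ∂ⱼμ₀(x)·∂ⱼg(x). Then the field F := (2/(λc + 2μc))·∇w + E satisfies, for each i and all x ∈ U, Σⱼ ∂ⱼ( λc·(div F)·δᵢⱼ + 2μc·(Sym∇F)ᵢⱼ )(x) = − Σⱼ ∂ⱼ( λ₀·(Δg)·δᵢⱼ + 2μ₀·∂ᵢ∂ⱼg )(x); that is, L_{λc,μc}F = (L_{λc,μc} − L_{λ₀,μ₀})(∇g) on U. -/
/-- The partial derivative of a scalar function on `ℝ³` in the `i`-th coordinate direction. -/
noncomputable def pd (i : Fin 3) (f : EuclideanSpace ℝ (Fin 3) → ℝ)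
    (x : EuclideanSpace ℝ (Fin 3)) : ℝ :=
  fderiv ℝ f x (EuclideanSpace.single i 1)

/-!
With constant coefficients the Lamé operator is linear and maps a gradient `∇w` to
`(λc + 2μc) ∇Δw`, so `L F = 2 ∇Δw + L E = -2 ∇(∇g · ∇μ₀) + 2 (∇∇μ₀) ∇g = -2 (∇∇g) ∇μ₀`.
On the other side `Δg = 0` removes the `λ₀` term, and
`div (2μ₀ ∇∇g) = 2 (∇∇g) ∇μ₀ + 2μ₀ ∇Δg = 2 (∇∇g) ∇μ₀`.
-/

open Finset

local notation "ℝ³" => EuclideanSpace ℝ (Fin 3)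

noncomputable def coordLaplacian (f : ℝ³ → ℝ) (x : ℝ³) : ℝ :=
  ∑ k, pd k (pd k f) x

noncomputable def stress (lam mu : ℝ³ → ℝ) (F : Fin 3 → ℝ³ → ℝ) (i j : Fin 3) (y : ℝ³) : ℝ :=
  lam y * (∑ k, pd k (F k) y) * (if i = j then 1 else 0)
    + 2 * mu y * ((pd j (F i) y + pd i (F j) y) / 2)

/-- `(L_{λ,μ} F)ᵢ` for the vector field `F` given by its components `F k`. -/
noncomputable def lame (lam mu : ℝ³ → ℝ) (F : Fin 3 → ℝ³ → ℝ) (i : Fin 3) (x : ℝ³) : ℝ :=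
  ∑ j, pd j (stress lam mu F i j) x

section pointwise

variable {x : ℝ³} {f h : ℝ³ → ℝ} {i : Fin 3}

lemma pd_const (c : ℝ) : pd i (fun _ => c) x = 0 := by
  simp [pd]

lemma pd_add (hf : DifferentiableAt ℝ f x) (hh : DifferentiableAt ℝ h x) :
    pd i (fun y => f y + h y) x = pd i f x + pd i h x := by
  simp [pd, fderiv_fun_add hf hh]

lemma pd_const_mul (hf : DifferentiableAt ℝ f x) (c : ℝ) :
    pd i (fun y => c * f y) x = c * pd i f x := by
  simp [pd, fderiv_const_mul hf c]

lemma pd_mul (hf : DifferentiableAt ℝ f x) (hh : DifferentiableAt ℝ h x) :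
    pd i (fun y => f y * h y) x = pd i f x * h x + f x * pd i h x := by
  simp only [pd, fderiv_fun_mul hf hh, add_apply, smul_apply, smul_eq_mul]
  ring

lemma pd_neg : pd i (fun y => -f y) x = -pd i f x := by
  simp [pd, fderiv_fun_neg]

lemma pd_sum {F : Fin 3 → ℝ³ → ℝ} (hF : ∀ k, DifferentiableAt ℝ (F k) x) :
    pd i (fun y => ∑ k, F k y) x = ∑ k, pd i (F k) x := by
  simp [pd, fderiv_fun_sum fun k _ => hF k]

lemma pd_sum_pd_mul_pd (hf : ∀ k, DifferentiableAt ℝ (pd k f) x)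
    (hh : ∀ k, DifferentiableAt ℝ (pd k h) x) :
    pd i (fun y => ∑ k, pd k f y * pd k h y) x
      = ∑ k, (pd i (pd k f) x * pd k h x + pd k f x * pd i (pd k h) x) := by
  rw [pd_sum fun k => (hf k).fun_mul (hh k)]
  exact sum_congr rfl fun k _ => pd_mul (hf k) (hh k)

end pointwise

lemma ContDiffOn.differentiableAt_of_isOpen {E F : Type*} [NormedAddCommGroup E]
    [NormedSpace ℝ E] [NormedAddCommGroup F] [NormedSpace ℝ F] {n : WithTop ℕ∞} {s : Set E}
    {φ : E → F} {x : E} (hφ : ContDiffOn ℝ n φ s) (hs : IsOpen s) (hx : x ∈ s) (hn : n ≠ 0) :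
    DifferentiableAt ℝ φ x :=
  (hφ.differentiableOn hn).differentiableAt (hs.mem_nhds hx)

section open_set

variable {U : Set ℝ³} {x : ℝ³} {f : ℝ³ → ℝ} {i j : Fin 3}

lemma pd_congr (hU : IsOpen U) (hx : x ∈ U) {h : ℝ³ → ℝ} (hfh : ∀ y ∈ U, f y = h y) :
    pd i f x = pd i h x := by
  unfold pd
  rw [Filter.EventuallyEq.fderiv_eq]
  filter_upwards [hU.mem_nhds hx] with y hy using hfh y hy

lemma contDiffOn_pd {n m : WithTop ℕ∞} (hU : IsOpen U) (hf : ContDiffOn ℝ n f U)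
    (hmn : m + 1 ≤ n) : ContDiffOn ℝ m (pd i f) U :=
  (hf.fderiv_of_isOpen hU hmn).clm_apply contDiffOn_const

lemma differentiableAt_pd {n : WithTop ℕ∞} (hU : IsOpen U) (hx : x ∈ U)
    (hf : ContDiffOn ℝ n f U) (hn : 2 ≤ n) : DifferentiableAt ℝ (pd i f) x :=
  (contDiffOn_pd (m := 1) hU hf hn).differentiableAt_of_isOpen hU hx one_ne_zero

lemma pd_comm {n : WithTop ℕ∞} (hU : IsOpen U) (hx : x ∈ U) (hf : ContDiffOn ℝ n f U)
    (hn : 2 ≤ n) : pd i (pd j f) x = pd j (pd i f) x := by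
  have hsymm : IsSymmSndFDerivAt ℝ f x :=
    (hf.contDiffAt (hU.mem_nhds hx)).isSymmSndFDerivAt
      (by simpa [minSmoothness_of_isRCLikeNormedField] using hn)
  have hdf : DifferentiableAt ℝ (fderiv ℝ f) x :=
    (hf.fderiv_of_isOpen hU (m := 1) hn).differentiableAt_of_isOpen hU hx one_ne_zero
  have hpd2 : ∀ a b : Fin 3, pd a (pd b f) x
      = fderiv ℝ (fderiv ℝ f) x (EuclideanSpace.single a 1) (EuclideanSpace.single b 1) := by
    intro a b
    unfold pd
    rw [fderiv_clm_apply hdf (differentiableAt_const _)]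
    simp
  rw [hpd2, hpd2, hsymm]

lemma differentiableAt_coordLaplacian (hU : IsOpen U) (hx : x ∈ U) (hf : ContDiffOn ℝ 3 f U) :
    DifferentiableAt ℝ (coordLaplacian f) x :=
  DifferentiableAt.fun_sum fun _ _ =>
    differentiableAt_pd hU hx (contDiffOn_pd (m := 2) hU hf le_rfl) le_rfl

lemma sum_pd_pd_pd_eq_pd_coordLaplacian (hU : IsOpen U) (hx : x ∈ U)
    (hf : ContDiffOn ℝ 3 f U) : ∑ j, pd j (pd i (pd j f)) x = pd i (coordLaplacian f) x := by
  have hf' (j : Fin 3) : ContDiffOn ℝ 2 (pd j f) U := contDiffOn_pd hU hf le_rfl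
  unfold coordLaplacian
  rw [pd_sum fun j => differentiableAt_pd hU hx (hf' j) le_rfl]
  exact sum_congr rfl fun j _ => pd_comm hU hx (hf' j) le_rfl

end open_set

section elasticity

variable {U : Set ℝ³} {x : ℝ³} {i j : Fin 3}

lemma differentiableAt_stress {y : ℝ³} {lam mu : ℝ³ → ℝ} {F : Fin 3 → ℝ³ → ℝ}
    (hlam : DifferentiableAt ℝ lam y) (hmu : DifferentiableAt ℝ mu y)
    (hF : ∀ k l, DifferentiableAt ℝ (pd k (F l)) y) :
    DifferentiableAt ℝ (stress lam mu F i j) y := by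
  unfold stress
  fun_prop

lemma stress_smul_add {y : ℝ³} (lam mu : ℝ³ → ℝ) {F G : Fin 3 → ℝ³ → ℝ}
    (hF : ∀ k, DifferentiableAt ℝ (F k) y) (hG : ∀ k, DifferentiableAt ℝ (G k) y) (c : ℝ) :
    stress lam mu (fun k v => c * F k v + G k v) i j y
      = c * stress lam mu F i j y + stress lam mu G i j y := by
  have hpd : ∀ a b, pd a (fun v => c * F b v + G b v) y = c * pd a (F b) y + pd a (G b) y :=
    fun a b => by rw [pd_add ((hF b).const_mul c) (hG b), pd_const_mul (hF b)]
  simp only [stress, hpd, sum_add_distrib, ← mul_sum]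
  ring

lemma lame_smul_add (hU : IsOpen U) (hx : x ∈ U) {lam mu : ℝ³ → ℝ}
    (hlam : ContDiffOn ℝ 1 lam U) (hmu : ContDiffOn ℝ 1 mu U) {F G : Fin 3 → ℝ³ → ℝ}
    (hF : ∀ k, ContDiffOn ℝ 2 (F k) U) (hG : ∀ k, ContDiffOn ℝ 2 (G k) U) (c : ℝ) :
    lame lam mu (fun k v => c * F k v + G k v) i x
      = c * lame lam mu F i x + lame lam mu G i x := by
  have hdiff {H : Fin 3 → ℝ³ → ℝ} (hH : ∀ k, ContDiffOn ℝ 2 (H k) U) (j : Fin 3) :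
      DifferentiableAt ℝ (stress lam mu H i j) x :=
    differentiableAt_stress (hlam.differentiableAt_of_isOpen hU hx one_ne_zero)
      (hmu.differentiableAt_of_isOpen hU hx one_ne_zero)
      fun k l => differentiableAt_pd hU hx (hH l) le_rfl
  have hstress (j : Fin 3) (y : ℝ³) (hy : y ∈ U) :=
    stress_smul_add lam mu (i := i) (j := j)
      (fun k => (hF k).differentiableAt_of_isOpen hU hy two_ne_zero)
      (fun k => (hG k).differentiableAt_of_isOpen hU hy two_ne_zero) c
  simp only [lame, mul_sum, ← sum_add_distrib]
  refine sum_congr rfl fun j _ => ?_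
  rw [pd_congr hU hx (hstress j), pd_add ((hdiff hF j).const_mul c) (hdiff hG j),
    pd_const_mul (hdiff hF j)]

lemma lame_grad (hU : IsOpen U) (hx : x ∈ U) {w : ℝ³ → ℝ} (hw : ContDiffOn ℝ 3 w U) (a b : ℝ) :
    lame (fun _ => a) (fun _ => b) (fun k => pd k w) i x
      = (a + 2 * b) * pd i (coordLaplacian w) x := by
  have hstress (j : Fin 3) (y : ℝ³) (hy : y ∈ U) :
      stress (fun _ => a) (fun _ => b) (fun k => pd k w) i j y
        = (a * if i = j then 1 else 0) * coordLaplacian w y + 2 * b * pd i (pd j w) y := by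
    unfold stress coordLaplacian
    rw [pd_comm hU hy hw (by norm_num : (2 : WithTop ℕ∞) ≤ 3)]
    ring
  have hw' (j : Fin 3) : DifferentiableAt ℝ (pd i (pd j w)) x :=
    differentiableAt_pd hU hx (contDiffOn_pd hU hw le_rfl) le_rfl
  have hΔw := differentiableAt_coordLaplacian hU hx hw
  have hterm (j : Fin 3) : pd j (stress (fun _ => a) (fun _ => b) (fun k => pd k w) i j) x
      = (a * if i = j then 1 else 0) * pd j (coordLaplacian w) x
        + 2 * b * pd j (pd i (pd j w)) x := by
    rw [pd_congr hU hx (hstress j), pd_add (hΔw.const_mul _) ((hw' j).const_mul _),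
      pd_const_mul hΔw, pd_const_mul (hw' j)]
  rw [lame, sum_congr rfl fun j _ => hterm j, sum_add_distrib, ← mul_sum,
    sum_pd_pd_pd_eq_pd_coordLaplacian hU hx hw]
  simp only [mul_ite, mul_one, mul_zero, ite_mul, zero_mul, sum_ite_eq, mem_univ, ↓reduceIte]
  ring

end elasticity

lemma sum_pd_hessian_stress_of_harmonic {U : Set ℝ³} (hU : IsOpen U) {x : ℝ³} (hx : x ∈ U)
    {g mu : ℝ³ → ℝ} (hg : ContDiffOn ℝ 3 g U) (hharm : ∀ y ∈ U, coordLaplacian g y = 0)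
    (hmu : ContDiffOn ℝ 1 mu U) (lam : ℝ³ → ℝ) (i : Fin 3) :
    ∑ j, pd j (fun y => lam y * coordLaplacian g y * (if i = j then 1 else 0)
        + 2 * mu y * pd i (pd j g) y) x
      = 2 * ∑ j, pd j mu x * pd i (pd j g) x := by
  have hmu' := hmu.differentiableAt_of_isOpen hU hx one_ne_zero
  have hg' (j : Fin 3) : DifferentiableAt ℝ (pd i (pd j g)) x :=
    differentiableAt_pd hU hx (contDiffOn_pd hU hg le_rfl) le_rfl
  have hterm (j : Fin 3) : pd j (fun y => lam y * coordLaplacian g y * (if i = j then 1 else 0)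
        + 2 * mu y * pd i (pd j g) y) x
      = 2 * (pd j mu x * pd i (pd j g) x + mu x * pd j (pd i (pd j g)) x) := by
    rw [pd_congr hU hx (h := fun y => 2 * (mu y * pd i (pd j g) y))
        fun y hy => by rw [hharm y hy]; ring,
      pd_const_mul (hmu'.fun_mul (hg' j)), pd_mul hmu' (hg' j)]
  have hΔg : pd i (coordLaplacian g) x = 0 := by
    rw [pd_congr hU hx hharm, pd_const]
  rw [sum_congr rfl fun j _ => hterm j, ← mul_sum, sum_add_distrib, ← mul_sum,
    sum_pd_pd_pd_eq_pd_coordLaplacian hU hx hg, hΔg, mul_zero, add_zero]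

theorem lame_claim1_general (U : Set (EuclideanSpace ℝ (Fin 3))) (hU : IsOpen U)
    (lamc muc : ℝ) (hc : lamc + 2*muc ≠ 0)
    (g lam0 mu0 w : EuclideanSpace ℝ (Fin 3) → ℝ)
    (E : EuclideanSpace ℝ (Fin 3) → EuclideanSpace ℝ (Fin 3))
    (hg : ContDiffOn ℝ 3 g U)
    (hharm : ∀ y ∈ U, ∑ k : Fin 3, pd k (pd k g) y = 0)
    (hmu0 : ContDiffOn ℝ 2 mu0 U)
    (hw : ContDiffOn ℝ 3 w U)
    (hwpde : ∀ x ∈ U,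
      ∑ k : Fin 3, pd k (pd k w) x = -∑ k : Fin 3, pd k g x * pd k mu0 x)
    (hE : ContDiffOn ℝ 2 E U)
    (hEpde : ∀ i : Fin 3, ∀ x ∈ U,
      ∑ j : Fin 3, pd j (fun y =>
          lamc * (∑ k : Fin 3, pd k (fun v => E v k) y) * (if i = j then (1:ℝ) else 0)
            + 2*muc * ((pd j (fun v => E v i) y + pd i (fun v => E v j) y) / 2)) x
        = 2 * ∑ j : Fin 3, pd i (pd j mu0) x * pd j g x)
    (x : EuclideanSpace ℝ (Fin 3)) (hx : x ∈ U) (i : Fin 3) :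
    ∑ j : Fin 3, pd j (fun y =>
        lamc * (∑ k : Fin 3,
            pd k (fun v => (2/(lamc + 2*muc)) * pd k w v + E v k) y)
          * (if i = j then (1:ℝ) else 0)
          + 2*muc * ((pd j (fun v => (2/(lamc + 2*muc)) * pd i w v + E v i) y
              + pd i (fun v => (2/(lamc + 2*muc)) * pd j w v + E v j) y) / 2)) x
      = -∑ j : Fin 3, pd j (fun y =>
          lam0 y * (∑ k : Fin 3, pd k (pd k g) y) * (if i = j then (1:ℝ) else 0)
            + 2 * mu0 y * pd i (pd j g) y) x := by
  change lame (fun _ => lamc) (fun _ => muc) (fun k v => 2 / (lamc + 2 * muc) * pd k w v + E v k)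
      i x = -∑ j, pd j (fun y => lam0 y * coordLaplacian g y * (if i = j then 1 else 0)
        + 2 * mu0 y * pd i (pd j g) y) x
  have hE' : lame (fun _ => lamc) (fun _ => muc) (fun k v => E v k) i x
      = 2 * ∑ j, pd i (pd j mu0) x * pd j g x := hEpde i x hx
  have hΔw : pd i (coordLaplacian w) x
      = -∑ k, (pd i (pd k g) x * pd k mu0 x + pd k g x * pd i (pd k mu0) x) := by
    rw [pd_congr hU hx (f := coordLaplacian w) hwpde, pd_neg, pd_sum_pd_mul_pd
      (fun _ => differentiableAt_pd hU hx hg (by norm_num))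
      (fun _ => differentiableAt_pd hU hx hmu0 le_rfl)]
  have hEk (k : Fin 3) : ContDiffOn ℝ 2 (fun v => E v k) U :=
    ((EuclideanSpace.proj k).contDiff.comp_contDiffOn hE :)
  rw [lame_smul_add hU hx contDiffOn_const contDiffOn_const
      (fun _ => contDiffOn_pd hU hw le_rfl) hEk,
    lame_grad hU hx hw, hE', hΔw, sum_pd_hessian_stress_of_harmonic hU hx hg hharm
      (hmu0.of_le one_le_two) lam0 i, ← mul_assoc, div_mul_cancel₀ 2 hc]
  simp only [Fin.sum_univ_three]
  ring

/-- **Claim 1.** Let `λc, μc` be real constants with `λc + 2μc ≠ 0`, `g` be `C³`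
and harmonic on an open `U ⊆ ℝ³`, `λ₀` be `C¹` and `μ₀` be `C²` on `U`.  Suppose `w` is `C³` on
`U` with `Δw = −∇g·∇μ₀` on `U`, and `E` is a `C²` vector field on `U` with
`L_{λc,μc}E = 2(∇∇μ₀)∇g` on `U`.  Then `F := (2/(λc+2μc))∇w + E` satisfies
`L_{λc,μc}F = −L_{λ₀,μ₀}(∇g)` (i.e. `= (L_{λc,μc} − L_{λ₀,μ₀})(∇g)`, since
`L_{λc,μc}(∇g) = (λc+2μc)∇(Δg) = 0`). -/
theorem lame_claim1 (U : Set (EuclideanSpace ℝ (Fin 3))) (hU : IsOpen U)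
    (lamc muc : ℝ) (hc : lamc + 2*muc ≠ 0)
    (g lam0 mu0 w : EuclideanSpace ℝ (Fin 3) → ℝ)
    (E : EuclideanSpace ℝ (Fin 3) → EuclideanSpace ℝ (Fin 3))
    (hg : ContDiffOn ℝ 3 g U)
    (hharm : ∀ y ∈ U, ∑ k : Fin 3, pd k (pd k g) y = 0)
    (hlam0 : ContDiffOn ℝ 1 lam0 U) (hmu0 : ContDiffOn ℝ 2 mu0 U)
    (hw : ContDiffOn ℝ 3 w U)
    (hwpde : ∀ x ∈ U,
      ∑ k : Fin 3, pd k (pd k w) x = -∑ k : Fin 3, pd k g x * pd k mu0 x)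
    (hE : ContDiffOn ℝ 2 E U)
    (hEpde : ∀ i : Fin 3, ∀ x ∈ U,
      ∑ j : Fin 3, pd j (fun y =>
          lamc * (∑ k : Fin 3, pd k (fun v => E v k) y) * (if i = j then (1:ℝ) else 0)
            + 2*muc * ((pd j (fun v => E v i) y + pd i (fun v => E v j) y) / 2)) x
        = 2 * ∑ j : Fin 3, pd i (pd j mu0) x * pd j g x)
    (x : EuclideanSpace ℝ (Fin 3)) (hx : x ∈ U) (i : Fin 3) :
    ∑ j : Fin 3, pd j (fun y =>
        lamc * (∑ k : Fin 3,
            pd k (fun v => (2/(lamc + 2*muc)) * pd k w v + E v k) y)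
          * (if i = j then (1:ℝ) else 0)
          + 2*muc * ((pd j (fun v => (2/(lamc + 2*muc)) * pd i w v + E v i) y
              + pd i (fun v => (2/(lamc + 2*muc)) * pd j w v + E v j) y) / 2)) x
      = -∑ j : Fin 3, pd j (fun y =>
          lam0 y * (∑ k : Fin 3, pd k (pd k g) y) * (if i = j then (1:ℝ) else 0)
            + 2 * mu0 y * pd i (pd j g) y) x :=
  lame_claim1_general U hU lamc muc hc g lam0 mu0 w E hg hharm hmu0 hw hwpde hE hEpde x hx i
end

section
/- Let s > 3 be a real number, D ⊆ ℝ³, a ∈ ℝ³, R > 0, and suppose there exist M ≥ 1 and δ₀ ∈ (0, R] such that for every δ ∈ (0, δ₀) there are p ∈ ℝ³ and r > 0 with the open ball B(p, r) contained in D, dist(p, a) + r ≤ δ, and δ ≤ M·r. Then the function x ↦ ∫⁻_{y ∈ D ∩ B(a,R)} ‖y − x‖^(−s) dy (lower Lebesgue integral with respect to Lebesgue measure on ℝ³, with values in [0,∞]) tends to ∞ as x → a with x ≠ a; i.e., it tends to ⊤ along the punctured neighborhood filter 𝓝[≠] a. -/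
/-!
On an interior ball `B(p, r) ⊆ S` the kernel `‖y - x‖^(-s)` is at least `(dist p x + r)^(-s)`,
so the integral is at least `(dist p x + r)^(-s) · vol B(p, r)`. Taking the ball given by the
interior-ball condition at scale `δ = ‖x - a‖` gives `dist p x + r ≤ 2δ` and `r ≥ δ / M`, hence a
lower bound of order `δ^(n - s)` in dimension `n`, which tends to `∞` as `δ → 0⁺` since `s > n`.
-/

open MeasureTheory Filter Metric Module
open scoped Topology ENNReal

theorem ofReal_rpow_neg_mul_measure_ball_le_setLIntegral {E : Type*} [NormedAddCommGroup E]
    [MeasurableSpace E] [OpensMeasurableSpace E] (μ : Measure E) [NullSingletonClass μ]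
    {S : Set E} {p x : E} {r s : ℝ} (hs : 0 ≤ s) (hS : ball p r ⊆ S) :
    ENNReal.ofReal ((dist p x + r) ^ (-s)) * μ (ball p r)
      ≤ ∫⁻ y in S, ENNReal.ofReal (‖y - x‖ ^ (-s)) ∂μ := by
  calc ENNReal.ofReal ((dist p x + r) ^ (-s)) * μ (ball p r)
      = ∫⁻ _ in ball p r, ENNReal.ofReal ((dist p x + r) ^ (-s)) ∂μ :=
        (setLIntegral_const _ _).symm
    _ ≤ ∫⁻ y in ball p r, ENNReal.ofReal (‖y - x‖ ^ (-s)) ∂μ := by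
        -- `y = x` is excluded because `0 ^ (-s) = 0` for `s ≠ 0`
        refine lintegral_mono_ae ?_
        filter_upwards [ae_restrict_mem measurableSet_ball,
          ae_restrict_of_ae (μ.ae_ne x)] with y hyp hyx
        refine ENNReal.ofReal_le_ofReal (Real.rpow_le_rpow_of_nonpos ?_ ?_ (neg_nonpos.2 hs))
        · exact norm_pos_iff.2 (sub_ne_zero.2 hyx)
        · rw [← dist_eq_norm]
          linarith [dist_triangle y p x, mem_ball.1 hyp]
    _ ≤ ∫⁻ y in S, ENNReal.ofReal (‖y - x‖ ^ (-s)) ∂μ := lintegral_mono_set hS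

theorem tendsto_rpow_neg_mul_mul_pow_nhdsGT_zero {n : ℕ} {s b c : ℝ} (hs : n < s)
    (hb : 0 < b) (hc : 0 < c) :
    Tendsto (fun t : ℝ => (b * t) ^ (-s) * (c * t) ^ n) (𝓝[>] 0) atTop := by
  have hpow : Tendsto (fun t : ℝ => b ^ (-s) * c ^ n * t ^ (n - s)) (𝓝[>] 0) atTop :=
    (tendsto_rpow_neg_nhdsGT_zero (by linarith)).const_mul_atTop (by positivity)
  refine hpow.congr' ?_
  filter_upwards [self_mem_nhdsWithin] with t (ht : 0 < t)
  rw [Real.mul_rpow hb.le ht.le, mul_pow, ← Real.rpow_natCast t n, Real.rpow_sub ht,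
    Real.rpow_neg ht.le]
  ring

theorem tendsto_setLIntegral_rpow_neg_norm_sub_nhds_top {E : Type*} [NormedAddCommGroup E]
    [NormedSpace ℝ E] [FiniteDimensional ℝ E] [MeasurableSpace E] [BorelSpace E]
    (μ : Measure E) [μ.IsAddHaarMeasure] {s M : ℝ} (hs : finrank ℝ E < s) (hM : 0 < M)
    {S : Set E} {a : E}
    (hballs : ∀ᶠ δ in 𝓝[>] 0, ∃ p r, ball p r ⊆ S ∧ dist p a + r ≤ δ ∧ δ ≤ M * r) :
    Tendsto (fun x => ∫⁻ y in S, ENNReal.ofReal (‖y - x‖ ^ (-s)) ∂μ) (𝓝[≠] a) (𝓝 ∞) := by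
  set n := finrank ℝ E
  have hs₀ : 0 ≤ s := n.cast_nonneg.trans hs.le
  have hbound : Tendsto (fun t : ℝ => ENNReal.ofReal ((2 * t) ^ (-s) * (M⁻¹ * t) ^ n)
      * μ (ball 0 1)) (𝓝[>] 0) (𝓝 ∞) := by
    have := ENNReal.Tendsto.mul_const (b := μ (ball 0 1))
      (ENNReal.tendsto_ofReal_nhds_top.2
        (tendsto_rpow_neg_mul_mul_pow_nhdsGT_zero hs two_pos (inv_pos.2 hM)))
      (Or.inl ENNReal.top_ne_zero)
    rwa [ENNReal.top_mul (measure_ball_pos μ 0 one_pos).ne'] at this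
  have hnorm := tendsto_norm_sub_self_nhdsNE a
  refine tendsto_nhds_top_mono (hbound.comp hnorm) ?_
  filter_upwards [self_mem_nhdsWithin, hnorm.eventually hballs] with x hxa ⟨p, r, hpS, hpa, hMr⟩
  -- makes `μ` atomless, as `ofReal_rpow_neg_mul_measure_ball_le_setLIntegral` requires
  have := nontrivial_of_ne x a hxa
  have ht : 0 < ‖x - a‖ := norm_pos_iff.2 (sub_ne_zero.2 hxa)
  have hr : 0 < r := pos_of_mul_pos_right (ht.trans_le hMr) hM.le
  have hpx : dist p x + r ≤ 2 * ‖x - a‖ := by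
    linarith [dist_triangle p a x, dist_eq_norm x a, dist_comm a x]
  calc ENNReal.ofReal ((2 * ‖x - a‖) ^ (-s) * (M⁻¹ * ‖x - a‖) ^ n) * μ (ball 0 1)
      = ENNReal.ofReal ((2 * ‖x - a‖) ^ (-s))
          * (ENNReal.ofReal ((M⁻¹ * ‖x - a‖) ^ n) * μ (ball 0 1)) := by
        rw [ENNReal.ofReal_mul (by positivity), mul_assoc]
    _ ≤ ENNReal.ofReal ((dist p x + r) ^ (-s)) * μ (ball p r) := by
        rw [μ.addHaar_ball_of_pos p hr]
        gcongr ?_ * (ENNReal.ofReal ?_ * _)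
        · exact ENNReal.ofReal_le_ofReal
            (Real.rpow_le_rpow_of_nonpos (by positivity) hpx (neg_nonpos.2 hs₀))
        · exact pow_le_pow_left₀ (by positivity) ((inv_mul_le_iff₀ hM).2 hMr) n
    _ ≤ ∫⁻ y in S, ENNReal.ofReal (‖y - x‖ ^ (-s)) ∂μ :=
        ofReal_rpow_neg_mul_measure_ball_le_setLIntegral μ hs₀ hpS

theorem lintegral_inv_rpow_tendsto_top_general (s : ℝ) (hs : 3 < s)
    (D : Set (EuclideanSpace ℝ (Fin 3))) (a : EuclideanSpace ℝ (Fin 3))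
    (R : ℝ)
    (h : ∃ M : ℝ, 1 ≤ M ∧ ∃ δ₀ ∈ Set.Ioc (0:ℝ) R, ∀ δ ∈ Set.Ioo (0:ℝ) δ₀,
      ∃ p : EuclideanSpace ℝ (Fin 3), ∃ r : ℝ, 0 < r ∧
        Metric.ball p r ⊆ D ∧ dist p a + r ≤ δ ∧ δ ≤ M * r) :
    Filter.Tendsto
      (fun x : EuclideanSpace ℝ (Fin 3) =>
        ∫⁻ y in D ∩ Metric.ball a R, ENNReal.ofReal (‖y - x‖ ^ (-s)))
      (nhdsWithin a {a}ᶜ) (nhds (⊤ : ENNReal)) := by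
  obtain ⟨M, hM, δ₀, ⟨hδ₀, hδ₀R⟩, hballs⟩ := h
  refine tendsto_setLIntegral_rpow_neg_norm_sub_nhds_top volume (by simpa using hs)
    (one_pos.trans_le hM) ?_
  filter_upwards [Ioo_mem_nhdsGT hδ₀] with δ hδ
  obtain ⟨p, r, -, hpD, hpa, hMr⟩ := hballs δ hδ
  refine ⟨p, r, fun y hy => ⟨hpD hy, mem_ball.2 ?_⟩, hpa, hMr⟩
  linarith [mem_ball.1 hy, dist_triangle y p a, hδ.2, hδ₀R]

/-- Let `s > 3`, `D ⊆ ℝ³`, `a ∈ ℝ³`, `R > 0`, and suppose there exist `M ≥ 1`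
and `δ₀ ∈ (0, R]` such that for every `δ ∈ (0, δ₀)` there are `p ∈ ℝ³` and `r > 0` with
`B(p,r) ⊆ D`, `dist p a + r ≤ δ`, and `δ ≤ M r` (an interior-ball condition, valid at any
boundary point of a Lipschitz domain).  Then
`x ↦ ∫⁻_{D ∩ B(a,R)} ‖y − x‖^{−s} dy` tends to `∞` as `x → a`, `x ≠ a`. -/
theorem lintegral_inv_rpow_tendsto_top (s : ℝ) (hs : 3 < s)
    (D : Set (EuclideanSpace ℝ (Fin 3))) (a : EuclideanSpace ℝ (Fin 3))
    (R : ℝ) (hR : 0 < R)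
    (h : ∃ M : ℝ, 1 ≤ M ∧ ∃ δ₀ ∈ Set.Ioc (0:ℝ) R, ∀ δ ∈ Set.Ioo (0:ℝ) δ₀,
      ∃ p : EuclideanSpace ℝ (Fin 3), ∃ r : ℝ, 0 < r ∧
        Metric.ball p r ⊆ D ∧ dist p a + r ≤ δ ∧ δ ≤ M * r) :
    Filter.Tendsto
      (fun x : EuclideanSpace ℝ (Fin 3) =>
        ∫⁻ y in D ∩ Metric.ball a R, ENNReal.ofReal (‖y - x‖ ^ (-s)))
      (nhdsWithin a {a}ᶜ) (nhds (⊤ : ENNReal)) :=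
  lintegral_inv_rpow_tendsto_top_general s hs D a R h
end
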